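/- Let A = (Q, Σ, S, Δ, F) be a nondeterministic finite automaton with finite state set Q that is trimmed with respect to the Büchi condition, i.e., for every state q ∈ Q there exists a nonempty finite word u such that some accepting state in F is reachable from q by a run on u. Then the ω-language L_ω(A) (under Büchi acceptance) is finite if and only if the finite-word language L_*(A) is slender. -/

import Mathlib

/-- A language is slender if there is a uniform bound `k` on the number of its words
of any given length. -/
def Slender {σ : Type*} (L : Set (List σ)) : Prop :=
  ∃ k : ℕ, ∀ ℓ : ℕ, {w ∈ L | w.length = ℓ}.Finite ∧ {w ∈ L | w.length = ℓ}.ncard ≤ k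

/-- Büchi acceptance of an ω-word by an NFA: there is a run starting in an initial
state, following the transition function, and visiting accepting states infinitely
often. -/
def BuchiAccepts {α Q : Type*} (M : NFA α Q) (w : ℕ → α) : Prop :=
  ∃ r : ℕ → Q, r 0 ∈ M.start ∧ (∀ n, r (n + 1) ∈ M.step (r n) (w n)) ∧
    ∀ n, ∃ m, n ≤ m ∧ r m ∈ M.accept

/-- An automaton is trimmed w.r.t. the Büchi condition if from every state some
accepting state is reachable by a nonempty word. -/
def TrimmedBuchi {α Q : Type*} (M : NFA α Q) : Prop :=
  ∀ q : Q, ∃ u : List α, u ≠ [] ∧ ∃ f ∈ M.accept, f ∈ M.evalFrom {q} u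


/-!
Under trimming, the length-`m` prefixes of `L_ω(A)` are exactly the words `u` on which `A` has a
run (`A.eval u ≠ ∅`): from any state one can keep stepping towards an accepting state along a
shortest path, which gives a run visiting `F` infinitely often. Every accepted word is such a
prefix, so a finite `L_ω(A)` bounds the number of accepted words of each length. Conversely, a
prefix `u` reaching the state `q` extends by a fixed word `v_q` to an accepted word of length
`m + |v_q|`, so slenderness with bound `k` leaves at most `|Q| k` prefixes of each length; and a
set of ω-words with boundedly many prefixes of each length is finite, since finitely many
distinct ω-words are already separated by their prefixes of some common length.
-/

open Set Filter

theorem slender_iff_exists_encard_le {σ : Type*} (L : Set (List σ)) :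
    Slender L ↔ ∃ k : ℕ, ∀ ℓ, {w ∈ L | w.length = ℓ}.encard ≤ k := by
  simp only [Slender, encard_le_coe_iff_finite_ncard_le]

namespace Stream'

variable {α : Type*}

theorem eventually_injOn_take {W : Set (Stream' α)} (hW : W.Finite) :
    ∀ᶠ m in atTop, W.InjOn (take m) := by
  have hpair : ∀ p ∈ W ×ˢ W, ∀ᶠ m in atTop, take m p.1 = take m p.2 → p.1 = p.2 := by
    rintro ⟨w, w'⟩ -
    by_cases h : ∀ n, take n w = take n w'
    · exact Eventually.of_forall fun _ _ => take_theorem _ _ h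
    · push Not at h
      obtain ⟨n, hn⟩ := h
      filter_upwards [eventually_ge_atTop n] with m hm heq
      refine absurd ?_ hn
      rw [← min_eq_right hm, ← take_take, heq, take_take]
  filter_upwards [(hW.prod hW).eventually_all.2 hpair] with m hm w hw w' hw' heq
  exact hm (w, w') ⟨hw, hw'⟩ heq

theorem encard_le_of_forall_encard_image_take_le {W : Set (Stream' α)} {K : ℕ∞}
    (h : ∀ m, (take m '' W).encard ≤ K) : W.encard ≤ K := by
  by_contra! hlt
  lift K to ℕ using hlt.ne_top
  obtain ⟨T, hTW, hT⟩ := exists_subset_encard_eq (Order.add_one_le_of_lt hlt)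
  have hTfin : T.Finite := finite_of_encard_eq_coe (k := K + 1) (by simpa using hT)
  obtain ⟨m, hm⟩ := (eventually_injOn_take hTfin).exists
  have hTK : T.encard ≤ K :=
    calc T.encard = (take m '' T).encard := hm.encard_image.symm
      _ ≤ (take m '' W).encard := encard_le_encard (image_mono hTW)
      _ ≤ K := h m
  rw [hT] at hTK
  exact hTK.not_gt ((ENat.lt_add_one_iff (ENat.natCast_ne_top K)).2 le_rfl)

end Stream'

namespace NFA

variable {α σ : Type*} {M : NFA α σ}

variable (M) in
/-- `BuchiAccepts M` is definitionally `M.BuchiAcceptsFrom M.start`, read on streams. -/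
def BuchiAcceptsFrom (S : Set σ) (w : Stream' α) : Prop :=
  ∃ r : ℕ → σ, r 0 ∈ S ∧ (∀ n, r (n + 1) ∈ M.step (r n) (w.get n)) ∧
    ∀ n, ∃ m, n ≤ m ∧ r m ∈ M.accept

theorem BuchiAcceptsFrom.mono {S T : Set σ} {w : Stream' α} (hST : S ⊆ T)
    (h : M.BuchiAcceptsFrom S w) : M.BuchiAcceptsFrom T w :=
  let ⟨r, h0, hstep, hacc⟩ := h
  ⟨r, hST h0, hstep, hacc⟩

theorem BuchiAcceptsFrom.cons {S : Set σ} {a : α} {w : Stream' α}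
    (h : M.BuchiAcceptsFrom (M.stepSet S a) w) : M.BuchiAcceptsFrom S (Stream'.cons a w) := by
  obtain ⟨r, h0, hstep, hacc⟩ := h
  obtain ⟨s, hs, hsr⟩ := M.mem_stepSet.1 h0
  refine ⟨fun n => n.casesOn s r, hs, ?_, fun n => ?_⟩
  · rintro (_ | n)
    exacts [hsr, hstep n]
  · obtain ⟨m, hnm, hm⟩ := hacc n
    exact ⟨m + 1, by omega, hm⟩

theorem BuchiAcceptsFrom.append {S : Set σ} {u : List α} {w : Stream' α}
    (h : M.BuchiAcceptsFrom (M.evalFrom S u) w) : M.BuchiAcceptsFrom S (u ++ₛ w) := by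
  induction u generalizing S with
  | nil => exact h
  | cons a u ih =>
    rw [Stream'.cons_append_stream]
    exact (ih h).cons

theorem exists_buchiAcceptsFrom_singleton_of_rank (rank : σ → ℕ)
    (hrank : ∀ q, ∃ a, ∃ q' ∈ M.step q a, q' ∈ M.accept ∨ rank q' < rank q) (q : σ) :
    ∃ w, M.BuchiAcceptsFrom {q} w := by
  choose a next hnext hdec using hrank
  set r : ℕ → σ := fun n => next^[n] q
  have hsucc : ∀ n, r (n + 1) = next (r n) := fun n => Function.iterate_succ_apply' next n q
  have hrecur : ∀ k n, rank (r n) = k → ∃ m, n ≤ m ∧ r m ∈ M.accept := by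
    intro k
    induction k using Nat.strong_induction_on with
    | _ k ih =>
      intro n hn
      rcases hdec (r n) with hacc | hlt
      · exact ⟨n + 1, n.le_succ, hsucc n ▸ hacc⟩
      · obtain ⟨m, hm, hmacc⟩ := ih _ (hn ▸ hsucc n ▸ hlt) (n + 1) rfl
        exact ⟨m, by omega, hmacc⟩
  exact ⟨fun n => a (r n), r, rfl, fun n => hsucc n ▸ hnext (r n), fun n => hrecur _ n rfl⟩

theorem exists_buchiAcceptsFrom_singleton (htrim : TrimmedBuchi M) (q : σ) :
    ∃ w, M.BuchiAcceptsFrom {q} w := by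
  classical
  -- `Nat.find (hlen q) + 1` is the length of a shortest nonempty word leading from `q` into `F`.
  have hlen : ∀ q, ∃ n, ∃ u : List α, u.length = n + 1 ∧ u ∈ M.acceptsFrom {q} := by
    intro q
    obtain ⟨u, hu, hacc⟩ := htrim q
    exact ⟨u.length - 1, u, by have := List.length_pos_iff.2 hu; omega, hacc⟩
  refine exists_buchiAcceptsFrom_singleton_of_rank (fun q => Nat.find (hlen q)) (fun q => ?_) q
  obtain ⟨_ | ⟨a, u⟩, hu_len, hu⟩ := Nat.find_spec (hlen q)
  · simp at hu_len
  obtain ⟨f, hf, hfu⟩ := (cons_mem_acceptsFrom M).1 hu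
  obtain ⟨q', hq', hu'⟩ := mem_evalFrom_iff_exists.1 hfu
  rw [stepSet_singleton] at hq'
  refine ⟨a, q', hq', ?_⟩
  rcases u with _ | ⟨b, u⟩
  · left
    obtain rfl : f = q' := by simpa using hu'
    exact hf
  · right
    refine (Nat.find_le ⟨b :: u, rfl, f, hf, hu'⟩).trans_lt ?_
    simp only [List.length_cons] at hu_len ⊢
    omega

theorem mem_evalFrom_take {S : Set σ} {w : Stream' α} {r : ℕ → σ} (h0 : r 0 ∈ S)
    (hstep : ∀ n, r (n + 1) ∈ M.step (r n) (w.get n)) (m : ℕ) :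
    r m ∈ M.evalFrom S (w.take m) := by
  induction m with
  | zero => exact h0
  | succ m ih =>
    rw [Stream'.take_succ', evalFrom_append, evalFrom_singleton, mem_stepSet]
    exact ⟨r m, ih, hstep m⟩

theorem image_take_setOf_buchiAccepts (htrim : TrimmedBuchi M) (m : ℕ) :
    Stream'.take m '' {w : ℕ → α | BuchiAccepts M w} =
      {u | u.length = m ∧ (M.eval u).Nonempty} := by
  ext u
  constructor
  · rintro ⟨w, ⟨r, h0, hstep, -⟩, rfl⟩
    exact ⟨Stream'.length_take .., r m, mem_evalFrom_take h0 hstep m⟩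
  · rintro ⟨rfl, q, hq⟩
    obtain ⟨w, hw⟩ := exists_buchiAcceptsFrom_singleton htrim q
    refine ⟨u ++ₛ w, (hw.mono (singleton_subset_iff.2 hq)).append, ?_⟩
    rw [Stream'.take_append_of_le_length (h := le_rfl), List.take_length]

theorem encard_length_eq_eval_nonempty_le [Fintype σ]
    (hreach : ∀ q, (M.acceptsFrom {q}).Nonempty) {k : ℕ}
    (hk : ∀ ℓ, {u ∈ M.accepts | u.length = ℓ}.encard ≤ k) (m : ℕ) :
    {u | u.length = m ∧ (M.eval u).Nonempty}.encard ≤ Fintype.card σ * k := by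
  choose v hv using hreach
  have hfiber : ∀ q, {u : List α | u.length = m ∧ q ∈ M.eval u}.encard ≤ k := by
    intro q
    refine le_trans (encard_le_encard_of_injOn (f := (· ++ v q))
      (t := {u ∈ M.accepts | u.length = m + (v q).length}) ?_
      fun u _ u' _ h => List.append_cancel_right h) (hk _)
    rintro u ⟨rfl, hq⟩
    obtain ⟨f, hf, hfv⟩ := hv q
    refine mem_sep ⟨f, hf, ?_⟩ List.length_append
    rw [eval, evalFrom_append]
    exact mem_evalFrom_iff_exists.2 ⟨q, hq, hfv⟩
  calc _ ≤ (⋃ q, {u : List α | u.length = m ∧ q ∈ M.eval u}).encard :=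
        encard_le_encard <| by
          rintro u ⟨hlen, q, hq⟩
          exact mem_iUnion.2 ⟨q, hlen, hq⟩
    _ ≤ ∑ q, {u : List α | u.length = m ∧ q ∈ M.eval u}.encard :=
        encard_iUnion_le_of_fintype _
    _ ≤ ∑ _q : σ, (k : ℕ∞) := Finset.sum_le_sum fun q _ => hfiber q
    _ = _ := by simp

end NFA

theorem buchi_lang_finite_iff_slender_general
    {α Q : Type*} [Fintype Q] (M : NFA α Q)
    (htrim : TrimmedBuchi M) :
    {w : ℕ → α | BuchiAccepts M w}.Finite ↔
      Slender {w : List α | w ∈ M.accepts} := by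
  have hprefix := NFA.image_take_setOf_buchiAccepts htrim
  rw [slender_iff_exists_encard_le]
  constructor
  · intro hfin
    refine ⟨{w : ℕ → α | BuchiAccepts M w}.ncard, fun ℓ => ?_⟩
    calc _ ≤ (Stream'.take ℓ '' {w : ℕ → α | BuchiAccepts M w}).encard := by
          refine encard_le_encard ?_
          rw [hprefix]
          rintro u ⟨⟨f, -, hfu⟩, rfl⟩
          exact ⟨rfl, f, hfu⟩
      _ ≤ _ := encard_image_le _ _
      _ = _ := hfin.cast_ncard_eq.symm
  · rintro ⟨k, hk⟩
    refine finite_of_encard_le_coe (k := Fintype.card Q * k)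
      (Stream'.encard_le_of_forall_encard_image_take_le fun m => ?_)
    refine (congrArg encard (hprefix m)).trans_le ?_
    exact NFA.encard_length_eq_eval_nonempty_le (fun q => (htrim q).imp fun _ => And.right) hk m

/-- for an automaton trimmed w.r.t. the Büchi condition, the ω-language
`L_ω(A)` is finite iff the finite-word language `L_*(A)` is slender. -/
theorem buchi_lang_finite_iff_slender
    {α Q : Type*} [Fintype α] [Fintype Q] (M : NFA α Q)
    (htrim : TrimmedBuchi M) :
    {w : ℕ → α | BuchiAccepts M w}.Finite ↔
      Slender {w : List α | w ∈ M.accepts} :=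
  buchi_lang_finite_iff_slender_general M htrim
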